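/- arXiv:1705.02767 — 2 statements merged into one kernel-verified Lean document; each statement's English description precedes it below -/
import Mathlib

section
/- Let A be a free arrangement in K^ℓ with exponents {1, e_2, ..., e_ℓ}. Fix H_0 ∈ A and m_0 ≥ 1, and let δ be the multiplicity concentrated at H_0 with value m_0, i.e. δ(H_0) = m_0 and δ(H) = 1 for H ≠ H_0. Then the multiarrangement (A, δ) is free with exponents {m_0, e_2, ..., e_ℓ}. -/
open MvPolynomial

open scoped Classical

noncomputable section

/-- A (polynomial) derivation on `K[x_1,...,x_n]`, given by its coefficient
vector: `θ` represents `∑ i, θ i * ∂/∂ x i`. -/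
abbrev MvDer (n : ℕ) (K : Type*) [Field K] : Type _ := Fin n → MvPolynomial (Fin n) K

/-- Application of a derivation (given by its coefficient vector) to a polynomial,
as a linear map over the polynomial ring. -/
def derAppL {K : Type*} [Field K] {n : ℕ} (f : MvPolynomial (Fin n) K) :
    MvDer n K →ₗ[MvPolynomial (Fin n) K] MvPolynomial (Fin n) K where
  toFun θ := ∑ i, θ i * MvPolynomial.pderiv i f
  map_add' θ₁ θ₂ := by
    simp [add_mul, Finset.sum_add_distrib]
  map_smul' c θ := by
    simp [Finset.mul_sum, smul_eq_mul, mul_assoc]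

/-- The module of derivations `D(A, μ)` of the multiarrangement with defining linear
forms `A` and multiplicity function `μ`:
`D(A,μ) = {θ : θ(α) ∈ α^(μ α) · S for all α ∈ A}`. -/
def Dmod {K : Type*} [Field K] {n : ℕ} (A : Finset (MvPolynomial (Fin n) K))
    (μ : MvPolynomial (Fin n) K → ℕ) :
    Submodule (MvPolynomial (Fin n) K) (MvDer n K) :=
  ⨅ α ∈ A, Submodule.comap (derAppL α) (Ideal.span {α ^ μ α})

/-- The module of derivations of a multiarrangement given as a finite set of
(form, multiplicity) pairs. -/
def DmodP {K : Type*} [Field K] {n : ℕ} (P : Finset (MvPolynomial (Fin n) K × ℕ)) :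
    Submodule (MvPolynomial (Fin n) K) (MvDer n K) :=
  ⨅ p ∈ P, Submodule.comap (derAppL p.1) (Ideal.span {p.1 ^ p.2})

/-- A derivation is homogeneous of polynomial degree `d` if all its coefficient
polynomials are homogeneous of degree `d`. -/
def IsHomogDer {K : Type*} [Field K] {n : ℕ} (θ : MvDer n K) (d : ℕ) : Prop :=
  ∀ i, (θ i).IsHomogeneous d

/-- `θ` is a basis of the submodule `D` of the module of derivations. -/
def IsBasisOf {K : Type*} [Field K] {n : ℕ} (θ : Fin n → MvDer n K)
    (D : Submodule (MvPolynomial (Fin n) K) (MvDer n K)) : Prop :=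
  (∀ i, θ i ∈ D) ∧ LinearIndependent (MvPolynomial (Fin n) K) θ ∧
    Submodule.span (MvPolynomial (Fin n) K) (Set.range θ) = D

/-- `D` is a free module with a homogeneous basis of degrees `e 0, ..., e (n-1)`. -/
def FreeWithExps {K : Type*} [Field K] {n : ℕ}
    (D : Submodule (MvPolynomial (Fin n) K) (MvDer n K)) (e : Fin n → ℕ) : Prop :=
  ∃ θ : Fin n → MvDer n K, IsBasisOf θ D ∧ ∀ i, IsHomogDer (θ i) (e i)

/-- `D` is a free module with a homogeneous basis whose multiset of degrees is `E`. -/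
def FreeWithExpM {K : Type*} [Field K] {n : ℕ}
    (D : Submodule (MvPolynomial (Fin n) K) (MvDer n K)) (E : Multiset ℕ) : Prop :=
  ∃ (θ : Fin n → MvDer n K) (d : Fin n → ℕ), IsBasisOf θ D ∧
    (∀ i, IsHomogDer (θ i) (d i)) ∧ Multiset.map d Finset.univ.val = E

/-- The zero set (kernel) of the linear form given by the polynomial `α`. -/
def kerV {K : Type*} [Field K] {n : ℕ} (α : MvPolynomial (Fin n) K) : Set (Fin n → K) :=
  {v | MvPolynomial.eval v α = 0}

/-- Pull back a polynomial along a linear embedding `ι : K^m → K^n`; for a linear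
form `α` this is the restriction of `α` to the image of `ι`, expressed in the
coordinates of `K^m`. -/
def restrictForm {K : Type*} [Field K] {m n : ℕ} (ι : (Fin m → K) →ₗ[K] (Fin n → K))
    (α : MvPolynomial (Fin n) K) : MvPolynomial (Fin m) K :=
  MvPolynomial.aeval
    (fun i : Fin n => ∑ j : Fin m, MvPolynomial.C (ι (Pi.single j 1) i) * MvPolynomial.X j) α

/-- `A''` is (a set of defining forms for) the restriction of the arrangement `A`
to the hyperplane `H₀ = ker α₀`, where `ι` is a linear parametrization of `H₀`:
the elements of `A''` are nonzero linear forms with pairwise distinct kernels,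
whose kernels are exactly the intersections `H ∩ H₀` for `H ∈ A \ {H₀}`. -/
def IsRestriction {K : Type*} [Field K] {m n : ℕ} (A : Finset (MvPolynomial (Fin n) K))
    (α₀ : MvPolynomial (Fin n) K) (ι : (Fin m → K) →ₗ[K] (Fin n → K))
    (A'' : Finset (MvPolynomial (Fin m) K)) : Prop :=
  (∀ β ∈ A'', β.IsHomogeneous 1 ∧ β ≠ 0) ∧
  (∀ β₁ ∈ A'', ∀ β₂ ∈ A'', kerV β₁ = kerV β₂ → β₁ = β₂) ∧
  (∀ α ∈ A, α ≠ α₀ → ∃ β ∈ A'', kerV β = kerV (restrictForm ι α)) ∧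
  (∀ β ∈ A'', ∃ α ∈ A, α ≠ α₀ ∧ kerV β = kerV (restrictForm ι α))

/-- Ziegler's canonical multiplicity: for a hyperplane `Y = ker β` of the
restriction, `κ(Y) = |A_Y| - 1`, the number of hyperplanes of `A` (other than
`H₀`) lying above `Y`. -/
def zieglerMult {K : Type*} [Field K] {m n : ℕ} (A : Finset (MvPolynomial (Fin n) K))
    (ι : (Fin m → K) →ₗ[K] (Fin n → K)) (β : MvPolynomial (Fin m) K) : ℕ :=
  ({α : MvPolynomial (Fin n) K |
      α ∈ A ∧ ∀ w ∈ kerV β, MvPolynomial.eval (ι w) α = 0}).ncard - 1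

end


/-!
Let `θ` be a homogeneous basis of `D(A)` and write `θᵢ(α₀) = α₀ pᵢ`. Applying the Euler
derivation `∑ fᵢ θᵢ ∈ D(A)` to `α₀` gives `∑ fᵢ pᵢ = 1`, so some homogeneous `pⱼ` is a nonzero
constant `c` and `θⱼ` has degree `1`; move it to position `0`. The shear `θᵢ ↦ θᵢ - c⁻¹ pᵢ θ₀`
(`i ≠ 0`) gives a homogeneous basis of `D(A)` with `θᵢ(α₀) = 0` for `i ≠ 0`. In that basis
`D(A, δ)` consists of the `∑ gᵢ θᵢ` with `α₀ ^ (m₀ - 1) ∣ g₀`, so replacing `θ₀` by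
`α₀ ^ (m₀ - 1) θ₀` gives a basis of it.
-/

open Submodule

section LinearAlgebra

variable {ι R M : Type*} [CommRing R] [AddCommGroup M] [Module R M]

theorem span_range_add_smul_self {v : ι → M} {i₀ : ι} {r : ι → R} (hr : r i₀ = 0) :
    span R (Set.range fun i => v i + r i • v i₀) = span R (Set.range v) := by
  apply le_antisymm <;> rw [span_le] <;> rintro _ ⟨i, rfl⟩
  · exact add_mem (subset_span ⟨i, rfl⟩) (smul_mem _ _ (subset_span ⟨i₀, rfl⟩))
  · have h : v i = (v i + r i • v i₀) - r i • (v i₀ + r i₀ • v i₀) := by simp [hr]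
    rw [h]
    exact sub_mem (subset_span ⟨i, rfl⟩) (smul_mem _ _ (subset_span ⟨i₀, rfl⟩))

variable [Fintype ι]

theorem LinearIndependent.of_span_range_eq [Nontrivial R] {v w : ι → M}
    (hv : LinearIndependent R v) (h : span R (Set.range w) = span R (Set.range v)) :
    LinearIndependent R w := by
  rw [linearIndependent_iff_card_eq_finrank_span] at hv ⊢
  rwa [Set.finrank, h]

variable [DecidableEq ι]

theorem LinearIndependent.update_smul [NoZeroDivisors R] {v : ι → M}
    (hv : LinearIndependent R v) (i₀ : ι) {s : R} (hs : s ≠ 0) :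
    LinearIndependent R (Function.update v i₀ (s • v i₀)) := by
  rw [Fintype.linearIndependent_iff] at hv ⊢
  intro g hg
  have hcoeff := hv (Function.update g i₀ (g i₀ * s)) (by
    rw [← hg]
    refine Finset.sum_congr rfl fun i _ => ?_
    rcases eq_or_ne i i₀ with rfl | hi
    · simp [mul_smul]
    · simp [hi])
  intro i
  rcases eq_or_ne i i₀ with rfl | hi
  · simpa [hs] using hcoeff i
  · simpa [hi] using hcoeff i

theorem span_range_update_smul [IsDomain R] {v : ι → M} {i₀ : ι} {φ : M →ₗ[R] R} {a u : R}
    (ha : a ≠ 0) (hu : IsUnit u) (hφ₀ : φ (v i₀) = a * u) (hφ : ∀ i ≠ i₀, φ (v i) = 0) (s : R) :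
    span R (Set.range (Function.update v i₀ (s • v i₀))) =
      span R (Set.range v) ⊓ comap φ (Ideal.span {a * s}) := by
  apply le_antisymm
  · rw [span_le]
    rintro _ ⟨i, rfl⟩
    rw [SetLike.mem_coe, mem_inf, mem_comap, Ideal.mem_span_singleton]
    rcases eq_or_ne i i₀ with rfl | hi
    · rw [Function.update_self, map_smul, hφ₀, smul_eq_mul]
      exact ⟨Submodule.smul_mem _ s (subset_span ⟨i, rfl⟩), u, by ring⟩
    · rw [Function.update_of_ne hi, hφ i hi]
      exact ⟨subset_span ⟨i, rfl⟩, dvd_zero _⟩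
  · intro x hx
    obtain ⟨hx, hφx⟩ := mem_inf.mp hx
    obtain ⟨g, rfl⟩ := (mem_span_range_iff_exists_fun R).mp hx
    have hφg : φ (∑ i, g i • v i) = a * (g i₀ * u) := by
      rw [map_sum, Finset.sum_eq_single i₀ (fun i _ hi => by rw [map_smul, hφ i hi, smul_zero])
        (by simp), map_smul, hφ₀, smul_eq_mul]
      ring
    rw [mem_comap, hφg, Ideal.mem_span_singleton, mul_dvd_mul_iff_left ha, hu.dvd_mul_right] at hφx
    obtain ⟨t, ht⟩ := hφx
    refine (mem_span_range_iff_exists_fun R).mpr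
      ⟨Function.update g i₀ t, Finset.sum_congr rfl fun i _ => ?_⟩
    rcases eq_or_ne i i₀ with rfl | hi
    · simp [ht, mul_comm s, mul_smul]
    · simp [hi]

end LinearAlgebra

section Homogeneous

variable {σ R : Type*} [CommRing R] {m d : ℕ} {p α : MvPolynomial σ R}

theorem homogeneousComponent_add_mul_of_isHomogeneous (hα : α.IsHomogeneous m) (k : ℕ) :
    homogeneousComponent (k + m) (p * α) = homogeneousComponent k p * α := by
  let _ := MvPolynomial.gradedAlgebra (σ := σ) (R := R)
  rw [← decomposition.decompose'_apply, ← decomposition.decompose'_apply]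
  exact DirectSum.coe_decompose_mul_add_of_right_mem _ ((mem_homogeneousSubmodule m α).mpr hα)

variable [IsDomain R]

theorem MvPolynomial.IsHomogeneous.of_mul_right (h : (p * α).IsHomogeneous (d + m))
    (hα : α.IsHomogeneous m) (hα0 : α ≠ 0) : p.IsHomogeneous d := by
  have hcomp : ∀ k ≠ d, homogeneousComponent k p = 0 := fun k hk => by
    have hk' := homogeneousComponent_add_mul_of_isHomogeneous (p := p) hα k
    rw [homogeneousComponent_of_mem ((mem_homogeneousSubmodule _ _).mpr h),
      if_neg (by omega)] at hk'
    exact (mul_eq_zero.mp hk'.symm).resolve_right hα0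
  have hp : homogeneousComponent d p = p := by
    ext s
    rw [coeff_homogeneousComponent]
    split_ifs with hs
    · rfl
    · have hs' := congrArg (coeff s) (hcomp _ hs)
      rwa [coeff_homogeneousComponent, if_pos rfl, coeff_zero, eq_comm] at hs'
  exact hp ▸ homogeneousComponent_isHomogeneous d p

theorem eq_C_of_isHomogeneous_mul (hα : α.IsHomogeneous m) (hα0 : α ≠ 0)
    (h : (p * α).IsHomogeneous d) (hp : coeff 0 p ≠ 0) : p = C (coeff 0 p) := by
  have hdm : d = 0 + m := by
    by_contra hne
    have hcomp := homogeneousComponent_add_mul_of_isHomogeneous (p := p) hα 0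
    rw [homogeneousComponent_of_mem ((mem_homogeneousSubmodule _ _).mpr h), if_neg (Ne.symm hne),
      homogeneousComponent_zero] at hcomp
    exact mul_ne_zero (C_ne_zero.mpr hp) hα0 hcomp.symm
  exact totalDegree_eq_zero_iff_eq_C.mp
    ((totalDegree_zero_iff_isHomogeneous σ).mpr ((hdm ▸ h).of_mul_right hα hα0))

end Homogeneous

section Derivations

variable {K : Type*} [Field K] {N : ℕ}

theorem mem_Dmod_iff {A : Finset (MvPolynomial (Fin N) K)} {μ : MvPolynomial (Fin N) K → ℕ}
    {θ : MvDer N K} : θ ∈ Dmod A μ ↔ ∀ α ∈ A, α ^ μ α ∣ derAppL α θ := by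
  simp [Dmod, mem_iInf, Ideal.mem_span_singleton]

theorem derAppL_X {α : MvPolynomial (Fin N) K} {m : ℕ} (hα : α.IsHomogeneous m) :
    derAppL α (fun i => X i) = m • α :=
  hα.sum_X_mul_pderiv

theorem IsHomogDer.derAppL {θ : MvDer N K} {α : MvPolynomial (Fin N) K} {d m : ℕ}
    (hθ : IsHomogDer θ d) (hα : α.IsHomogeneous m) :
    (derAppL α θ).IsHomogeneous (d + (m - 1)) :=
  IsHomogeneous.sum _ _ _ fun i _ => (hθ i).mul hα.pderiv

theorem X_mem_Dmod {A : Finset (MvPolynomial (Fin N) K)} (hA : ∀ α ∈ A, α.IsHomogeneous 1) :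
    (fun i => X i) ∈ Dmod A fun _ => 1 :=
  mem_Dmod_iff.mpr fun α hα => by rw [derAppL_X (hA α hα), one_smul, pow_one]

theorem Dmod_ite_eq_inf {A : Finset (MvPolynomial (Fin N) K)} {μ : MvPolynomial (Fin N) K → ℕ}
    {α₀ : MvPolynomial (Fin N) K} {m : ℕ} (hα₀ : α₀ ∈ A) (hm : μ α₀ ≤ m) :
    Dmod A (fun α => if α = α₀ then m else μ α) =
      Dmod A μ ⊓ comap (derAppL α₀) (Ideal.span {α₀ ^ m}) := by
  ext θ
  simp only [mem_inf, mem_Dmod_iff, mem_comap, Ideal.mem_span_singleton]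
  constructor
  · intro h
    refine ⟨fun α hα => ?_, by simpa using h α₀ hα₀⟩
    have hα' := h α hα
    split_ifs at hα' with hαα
    · subst hαα
      exact (pow_dvd_pow α hm).trans hα'
    · exact hα'
  · rintro ⟨h, h₀⟩ α hα
    split_ifs with hαα
    · subst hαα
      exact h₀
    · exact h α hα

theorem isBasisOf_of_linearIndependent {θ : Fin N → MvDer N K}
    {D : Submodule (MvPolynomial (Fin N) K) (MvDer N K)}
    (hli : LinearIndependent (MvPolynomial (Fin N) K) θ)
    (hspan : span (MvPolynomial (Fin N) K) (Set.range θ) = D) : IsBasisOf θ D :=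
  ⟨fun i => hspan ▸ subset_span ⟨i, rfl⟩, hli, hspan⟩

theorem IsBasisOf.comp_perm {θ : Fin N → MvDer N K}
    {D : Submodule (MvPolynomial (Fin N) K) (MvDer N K)} (h : IsBasisOf θ D)
    (τ : Equiv.Perm (Fin N)) : IsBasisOf (θ ∘ τ) D :=
  isBasisOf_of_linearIndependent (h.2.1.comp τ τ.injective)
    (by rw [τ.surjective.range_comp, h.2.2])

variable {A : Finset (MvPolynomial (Fin N) K)} {α₀ : MvPolynomial (Fin N) K}
  {e : Fin N → ℕ} {c : K}

theorem exists_derAppL_eq_mul_C (hA : ∀ α ∈ A, α.IsHomogeneous 1) (hα₀ : α₀ ∈ A)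
    (hα₀ne : α₀ ≠ 0) {θ : Fin N → MvDer N K} (hθ : IsBasisOf θ (Dmod A fun _ => 1))
    (hhom : ∀ i, IsHomogDer (θ i) (e i)) :
    ∃ j c, c ≠ 0 ∧ derAppL α₀ (θ j) = α₀ * C c ∧ e j = 1 := by
  have hα₀h := hA α₀ hα₀
  choose p hp using fun i => by simpa using mem_Dmod_iff.mp (hθ.1 i) α₀ hα₀
  obtain ⟨f, hf⟩ := (mem_span_range_iff_exists_fun _).mp (hθ.2.2 ▸ X_mem_Dmod hA)
  have hfp : ∑ i, f i * p i = 1 := by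
    apply mul_left_cancel₀ hα₀ne
    calc α₀ * ∑ i, f i * p i = derAppL α₀ (∑ i, f i • θ i) := by
          simp only [map_sum, map_smul, hp, smul_eq_mul, Finset.mul_sum]
          exact Finset.sum_congr rfl fun i _ => by ring
      _ = α₀ * 1 := by rw [hf, derAppL_X hα₀h, one_smul, mul_one]
  obtain ⟨j, hj⟩ : ∃ j, coeff 0 (p j) ≠ 0 := by
    by_contra! h
    have h1 := congrArg constantCoeff hfp
    simp only [map_sum, map_mul, constantCoeff_eq, h, mul_zero, Finset.sum_const_zero,
      map_one] at h1
    exact zero_ne_one h1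
  have hjhom : (p j * α₀).IsHomogeneous (e j + (1 - 1)) := by
    rw [mul_comm, ← hp j]
    exact (hhom j).derAppL hα₀h
  have hpj := eq_C_of_isHomogeneous_mul hα₀h hα₀ne hjhom hj
  have hjhom' : (p j * α₀).IsHomogeneous (0 + 1) := by
    rw [hpj]
    exact (isHomogeneous_C _ _).mul hα₀h
  have hne : p j * α₀ ≠ 0 := mul_ne_zero (by rw [hpj]; exact C_ne_zero.mpr hj) hα₀ne
  refine ⟨j, coeff 0 (p j), hj, hpj ▸ hp j, ?_⟩
  simpa using hjhom.inj_right hjhom' hne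

theorem exists_isBasisOf_derAppL_eq_zero {θ : Fin N → MvDer N K} {i₀ : Fin N}
    (hθ : IsBasisOf θ (Dmod A fun _ => 1)) (hhom : ∀ i, IsHomogDer (θ i) (e i)) (he : e i₀ = 1)
    (hα₀ : α₀ ∈ A) (hα₀h : α₀.IsHomogeneous 1) (hα₀ne : α₀ ≠ 0) (hc : c ≠ 0)
    (hθ₀ : derAppL α₀ (θ i₀) = α₀ * C c) :
    ∃ Ψ : Fin N → MvDer N K, IsBasisOf Ψ (Dmod A fun _ => 1) ∧ (∀ i, IsHomogDer (Ψ i) (e i)) ∧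
      Ψ i₀ = θ i₀ ∧ ∀ i ≠ i₀, derAppL α₀ (Ψ i) = 0 := by
  choose p hp using fun i => by simpa using mem_Dmod_iff.mp (hθ.1 i) α₀ hα₀
  set r := Function.update (fun i => -(C c⁻¹ * p i)) i₀ 0 with hr
  have hr₀ : r i₀ = 0 := by simp [hr]
  have hspan := span_range_add_smul_self (v := θ) hr₀
  refine ⟨fun i => θ i + r i • θ i₀,
    isBasisOf_of_linearIndependent (hθ.2.1.of_span_range_eq hspan) (hspan.trans hθ.2.2),
    fun i k => ?_, by simp [hr₀], fun i hi => ?_⟩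
  · rcases eq_or_ne i i₀ with rfl | hi
    · simpa [hr₀] using hhom i k
    -- the degree of `pᵢ θ_{i₀}` is read off `θᵢ(α₀) θ_{i₀} = α₀ pᵢ θ_{i₀}` by cancelling `α₀`
    have hpθ : (p i * θ i₀ k * α₀).IsHomogeneous (e i + 1) := by
      have h := ((hhom i).derAppL hα₀h).mul (hhom i₀ k)
      rw [hp i, he] at h
      convert h using 1
      ring
    simpa [hr, hi, mul_assoc] using
      (hhom i k).add ((hpθ.of_mul_right hα₀h hα₀ne).C_mul (-c⁻¹))
  · have hCC : C c⁻¹ * C c = (1 : MvPolynomial (Fin N) K) := by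
      rw [← C_mul, inv_mul_cancel₀ hc, C_1]
    simp only [hr, map_add, map_smul, Function.update_of_ne hi, smul_eq_mul]
    rw [hθ₀, hp i]
    linear_combination (-(α₀ * p i)) * hCC

theorem freeWithExps_ite_of_derAppL_eq_zero {Ψ : Fin N → MvDer N K} {i₀ : Fin N}
    (hΨ : IsBasisOf Ψ (Dmod A fun _ => 1)) (hhom : ∀ i, IsHomogDer (Ψ i) (e i)) (he : e i₀ = 1)
    (hα₀ : α₀ ∈ A) (hα₀h : α₀.IsHomogeneous 1) (hα₀ne : α₀ ≠ 0) (hc : c ≠ 0)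
    (hΨ₀ : derAppL α₀ (Ψ i₀) = α₀ * C c) (hΨ' : ∀ i ≠ i₀, derAppL α₀ (Ψ i) = 0) (k : ℕ) :
    FreeWithExps (Dmod A fun α => if α = α₀ then k + 1 else 1)
      (fun i => if i = i₀ then k + 1 else e i) := by
  have hspan := span_range_update_smul hα₀ne ((isUnit_iff_ne_zero.mpr hc).map C) hΨ₀ hΨ' (α₀ ^ k)
  rw [hΨ.2.2, ← pow_succ', ← Dmod_ite_eq_inf hα₀ (by omega)] at hspan
  refine ⟨_, isBasisOf_of_linearIndependent (hΨ.2.1.update_smul i₀ (pow_ne_zero k hα₀ne)) hspan,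
    fun i j => ?_⟩
  rcases eq_or_ne i i₀ with rfl | hi
  · simpa [he, mul_comm] using (hα₀h.pow k).mul (hhom i j)
  · simpa [hi] using hhom i j

end Derivations

theorem concentrated_multiplicity_free_general
    {K : Type*} [Field K] {n : ℕ}
    (A : Finset (MvPolynomial (Fin (n + 1)) K))
    (hforms : ∀ α ∈ A, α.IsHomogeneous 1 ∧ α ≠ 0)
    (α₀ : MvPolynomial (Fin (n + 1)) K) (hα₀ : α₀ ∈ A)
    (m₀ : ℕ) (hm₀ : 1 ≤ m₀)
    (e : Fin (n + 1) → ℕ) (he : e 0 = 1)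
    (hfree : FreeWithExps (Dmod A fun _ => 1) e) :
    FreeWithExps (Dmod A fun α => if α = α₀ then m₀ else 1)
      (fun i => if i = 0 then m₀ else e i) := by
  obtain ⟨θ, hθ, hhom⟩ := hfree
  obtain ⟨hα₀h, hα₀ne⟩ := hforms α₀ hα₀
  obtain ⟨j, c, hc, hθj, hej⟩ :=
    exists_derAppL_eq_mul_C (fun α hα => (hforms α hα).1) hα₀ hα₀ne hθ hhom
  set τ := Equiv.swap 0 j
  have heτ : ∀ i, e (τ i) = e i := fun i => by
    rcases eq_or_ne i 0 with rfl | h0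
    · simp [τ, he, hej]
    rcases eq_or_ne i j with rfl | hj
    · simp [τ, he, hej]
    rw [Equiv.swap_apply_of_ne_of_ne h0 hj]
  obtain ⟨Ψ, hΨ, hΨhom, hΨ₀, hΨ'⟩ := exists_isBasisOf_derAppL_eq_zero (hθ.comp_perm τ)
    (fun i => heτ i ▸ hhom (τ i)) he hα₀ hα₀h hα₀ne hc (by simpa [τ] using hθj)
  obtain ⟨k, rfl⟩ := Nat.exists_eq_add_of_le' hm₀
  exact freeWithExps_ite_of_derAppL_eq_zero hΨ hΨhom he hα₀ hα₀h hα₀ne hc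
    (by simpa [hΨ₀, τ] using hθj) hΨ' k

/-- If `A` is free with exponents `{1, e_2, ..., e_ℓ}` and `δ` is the
multiplicity concentrated at `H₀` with value `m₀`, then `(A, δ)` is free with
exponents `{m₀, e_2, ..., e_ℓ}`. -/
theorem concentrated_multiplicity_free
    {K : Type*} [Field K] {n : ℕ}
    (A : Finset (MvPolynomial (Fin (n + 1)) K))
    (hforms : ∀ α ∈ A, α.IsHomogeneous 1 ∧ α ≠ 0)
    (hdist : ∀ α ∈ A, ∀ β ∈ A, kerV α = kerV β → α = β)
    (α₀ : MvPolynomial (Fin (n + 1)) K) (hα₀ : α₀ ∈ A)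
    (m₀ : ℕ) (hm₀ : 1 ≤ m₀)
    (e : Fin (n + 1) → ℕ) (he : e 0 = 1)
    (hfree : FreeWithExps (Dmod A fun _ => 1) e) :
    FreeWithExps (Dmod A fun α => if α = α₀ then m₀ else 1)
      (fun i => if i = 0 then m₀ else e i) :=
  concentrated_multiplicity_free_general A hforms α₀ hα₀ m₀ hm₀ e he hfree
end

section
/- Let A be the rank-3 multiarrangement in ℂ^3 with defining polynomial Q = x_1^{r−1} (x_1^r − x_2^r)^2 (x_1^r − x_3^r)^2 (x_2^r − x_3^r), for r ≥ 2. Then (A, μ) is free with exponents {r+1, 2r+1, 3(r−1)}. -/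
open MvPolynomial

open scoped Classical

/-!
Saito's criterion. The three explicit derivations `basisDer` lie in `D(A, μ)`, are homogeneous
of degrees `r + 1, 2r + 1, 3(r - 1)`, and their coefficient determinant is `r · Q`. Conversely,
for any `η₁, η₂, η₃ ∈ D(A, μ)` each `α ^ μ(α)` divides `det η` (by a column operation), and the
forms `α` are pairwise non-associate primes, so `Q ∣ det η`. Cramer's rule then writes every
element of `D(A, μ)` as an `S`-combination of the `basisDer i`.
-/

open Finset
open scoped Matrix

theorem Matrix.span_rows_eq_of_det_eq_unit_mul {R : Type*} [CommRing R] [IsDomain R] {n : ℕ}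
    {D : Submodule R (Fin n → R)} {θ : Fin n → Fin n → R} {Q u : R} (hu : IsUnit u) (hQ : Q ≠ 0)
    (hθ : ∀ i, θ i ∈ D) (hdet : (Matrix.of θ).det = u * Q)
    (hdvd : ∀ η : Fin n → Fin n → R, (∀ i, η i ∈ D) → Q ∣ (Matrix.of η).det) :
    Submodule.span R (Set.range θ) = D := by
  refine le_antisymm (Submodule.span_le.mpr (Set.range_subset_iff.mpr hθ)) fun b hb => ?_
  set A := (Matrix.of θ)ᵀ
  -- Cramer's rule: `det θ • b = ∑ i, cramer b i • θ i`, and `cramer b i` is the determinant of `θ`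
  -- with `θ i` replaced by `b`.
  have hcramer : ∀ i, Q ∣ A.cramer b i := fun i => by
    rw [Matrix.cramer_apply, Matrix.updateCol_transpose, Matrix.det_transpose]
    refine hdvd (Function.update θ i b) fun l => ?_
    rcases eq_or_ne l i with rfl | hl
    · simpa using hb
    · simpa [hl] using hθ l
  choose h hh using hcramer
  have hcomb : A *ᵥ h = ∑ i, h i • θ i := by
    ext k
    simp [A, Matrix.mulVec, dotProduct, mul_comm]
  have hub : u • b = ∑ i, h i • θ i := by
    refine (smul_right_injective _ hQ ?_).symm.trans hcomb
    change Q • (A *ᵥ h) = Q • (u • b)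
    rw [← Matrix.mulVec_smul, smul_smul, mul_comm, ← hdet, ← Matrix.det_transpose,
      ← Matrix.mulVec_cramer]
    congr 1
    funext i
    rw [hh, Pi.smul_apply, smul_eq_mul]
  rw [← inv_smul_smul hu.unit b, Units.smul_def hu.unit b, hu.unit_spec, hub]
  exact Submodule.smul_mem _ _ (Submodule.sum_mem _ fun i _ =>
    Submodule.smul_mem _ _ (Submodule.subset_span ⟨i, rfl⟩))

theorem isBasisOf_of_det_eq_unit_mul {K : Type*} [Field K] {n : ℕ}
    {D : Submodule (MvPolynomial (Fin n) K) (MvDer n K)} {θ : Fin n → MvDer n K}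
    {Q u : MvPolynomial (Fin n) K} (hu : IsUnit u) (hQ : Q ≠ 0) (hθ : ∀ i, θ i ∈ D)
    (hdet : (Matrix.of θ).det = u * Q)
    (hdvd : ∀ η : Fin n → MvDer n K, (∀ i, η i ∈ D) → Q ∣ (Matrix.of η).det) :
    IsBasisOf θ D :=
  ⟨hθ, Matrix.linearIndependent_rows_of_det_ne_zero (hdet ▸ mul_ne_zero hu.ne_zero hQ),
    Matrix.span_rows_eq_of_det_eq_unit_mul hu hQ hθ hdet hdvd⟩

section Derivations

variable {K : Type*} [Field K] {n : ℕ}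

theorem mem_DmodP_iff {P : Finset (MvPolynomial (Fin n) K × ℕ)} {θ : MvDer n K} :
    θ ∈ DmodP P ↔ ∀ p ∈ P, p.1 ^ p.2 ∣ derAppL p.1 θ := by
  simp [DmodP, Ideal.mem_span_singleton]

theorem derAppL_X_s14 (a : Fin n) (θ : MvDer n K) : derAppL (X a) θ = θ a := by
  simp [derAppL, pderiv_X, Pi.single_apply]

theorem derAppL_X_sub_C_mul_X (a b : Fin n) (c : K) (θ : MvDer n K) :
    derAppL (X a - C c * X b) θ = θ a - C c * θ b := by
  simp [derAppL, pderiv_X, Pi.single_apply, mul_sub, Finset.sum_sub_distrib]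
  ring

/-- Replacing column `i` by `∑ k, ∂p.1/∂x_k • (column k)` multiplies the determinant by the unit
`∂p.1/∂x_i` and yields the column `(η_l(p.1))_l`, which `p.1 ^ p.2` divides. -/
theorem pow_dvd_det_of_mem_DmodP {P : Finset (MvPolynomial (Fin n) K × ℕ)}
    {η : Fin n → MvDer n K} (hη : ∀ l, η l ∈ DmodP P) {p : MvPolynomial (Fin n) K × ℕ}
    (hp : p ∈ P) {i : Fin n} (hi : IsUnit (pderiv i p.1)) :
    p.1 ^ p.2 ∣ (Matrix.of η).det := by
  choose g hg using fun l => mem_DmodP_iff.mp (hη l) p hp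
  have hcol : (fun l => ∑ k, pderiv k p.1 • Matrix.of η l k) = p.1 ^ p.2 • g := by
    funext l
    rw [Pi.smul_apply, smul_eq_mul, ← hg l]
    simp [derAppL, mul_comm]
  have := Matrix.det_updateCol_sum (Matrix.of η) i (fun k => pderiv k p.1)
  rw [hcol, Matrix.det_updateCol_smul, smul_eq_mul] at this
  exact (hi.dvd_mul_left).mp ⟨_, this.symm⟩

end Derivations

/-- `X i - c X j` generates the kernel of the substitution `X i ↦ c X j`, a map into a domain. -/
theorem MvPolynomial.prime_X_sub_C_mul_X {R σ : Type*} [CommRing R] [IsDomain R] {i j : σ}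
    (hij : i ≠ j) (c : R) : Prime (X i - C c * X j : MvPolynomial σ R) := by
  set α : MvPolynomial σ R := X i - C c * X j
  set φ := aeval (R := R) (Function.update X i (C c * X j))
  have hα : α ≠ 0 := fun h => by
    simpa [α, Pi.single_apply, hij.symm] using congrArg (eval (Pi.single i 1)) h
  have hφα : φ α = 0 := by simp [α, φ, Function.update_of_ne hij.symm]
  have hmk : (Ideal.Quotient.mkₐ R (Ideal.span {α})).comp φ = Ideal.Quotient.mkₐ R _ := by
    refine MvPolynomial.algHom_ext fun k => ?_
    rcases eq_or_ne k i with rfl | hk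
    · simp only [AlgHom.comp_apply, φ, aeval_X, Function.update_self]
      exact (Ideal.Quotient.mk_eq_mk_iff_sub_mem _ _).mpr
        (Ideal.mem_span_singleton.mpr ⟨-1, by ring⟩)
    · simp [φ, Function.update_of_ne hk]
  have hker : Ideal.span {α} = RingHom.ker φ := by
    refine le_antisymm ((Ideal.span_singleton_le_iff_mem _).mpr hφα) fun f hf => ?_
    rw [← Ideal.Quotient.eq_zero_iff_mem, ← Ideal.Quotient.mkₐ_eq_mk R, ← hmk]
    simp [(RingHom.mem_ker).mp hf]
  rw [← Ideal.span_singleton_prime hα, hker]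
  exact RingHom.ker_isPrime _

theorem MvPolynomial.not_dvd_of_eval_eq_zero {R σ : Type*} [CommRing R] {α β : MvPolynomial σ R}
    (v : σ → R) (hα : eval v α = 0) (hβ : eval v β ≠ 0) : ¬ α ∣ β := by
  rintro ⟨g, rfl⟩
  simp [hα] at hβ

theorem IsPrimitiveRoot.prod_range_sub_pow_mul {R : Type*} [CommRing R] [IsDomain R] {ζ : R}
    {n : ℕ} (hζ : IsPrimitiveRoot ζ n) (hn : 0 < n) (a b : R) :
    ∏ k ∈ range n, (a - ζ ^ k * b) = a ^ n - b ^ n := by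
  have hinj : Set.InjOn (ζ ^ ·) (range n : Set ℕ) := fun k hk l hl h =>
    hζ.pow_inj (mem_range.mp hk) (mem_range.mp hl) h
  have himage : (range n).image (ζ ^ ·) = Polynomial.nthRootsFinset n (1 : R) := by
    refine eq_of_subset_of_card_le (fun x hx => ?_) ?_
    · obtain ⟨k, -, rfl⟩ := mem_image.mp hx
      rw [Polynomial.mem_nthRootsFinset hn, ← pow_mul, mul_comm, pow_mul, hζ.pow_eq_one, one_pow]
    · rw [hζ.card_nthRootsFinset, card_image_of_injOn hinj, card_range]
  rw [hζ.pow_sub_pow_eq_prod_sub_mul a b hn, ← himage, prod_image hinj]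

theorem sub_mul_dvd_pow_sub_pow_of_pow_eq_one {R : Type*} [CommRing R] {u : R} {n : ℕ}
    (hu : u ^ n = 1) (a b : R) : a - u * b ∣ a ^ n - b ^ n := by
  simpa [mul_pow, hu] using sub_dvd_pow_sub_pow a (u * b) n

theorem sub_sq_dvd_natCast_mul_pow_succ_sub {R : Type*} [CommRing R] (a b : R) (n : ℕ) :
    (a - b) ^ 2 ∣ n * a ^ (n + 1) - (n + 1) * a ^ n * b + b ^ (n + 1) := by
  induction n with
  | zero => simp
  | succ n ih =>
    have hstep : (a - b) ^ 2 ∣ (a - b) * (a ^ (n + 1) - b ^ (n + 1)) :=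
      pow_two (a - b) ▸ mul_dvd_mul_left _ (sub_dvd_pow_sub_pow a b (n + 1))
    convert dvd_add (ih.mul_left a) hstep using 1
    push_cast
    ring

theorem MvPolynomial.isHomogeneous_natCast_add {σ R : Type*} [CommSemiring R] (m a : ℕ) :
    ((m : MvPolynomial σ R) + a).IsHomogeneous 0 := by
  rw [← Nat.cast_add, ← map_natCast C]
  exact isHomogeneous_C _ _

theorem MvPolynomial.IsHomogeneous.mul_of_add_eq {σ R : Type*} [CommSemiring R]
    {p q : MvPolynomial σ R} {a b d : ℕ} (hp : p.IsHomogeneous a) (hq : q.IsHomogeneous b)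
    (h : a + b = d) :
    (p * q).IsHomogeneous d :=
  h ▸ hp.mul hq

namespace Grr4

local notation "S" => MvPolynomial (Fin 3) ℂ

/-- The hyperplanes `x_a = c x_b` (`c ^ r = 1`) of the arrangement form three families, indexed by
`e : Fin 3` with `(a, b) = (src e, tgt e)`; `mult e` is their multiplicity. -/
def src : Fin 3 → Fin 3 := ![0, 0, 1]

def tgt : Fin 3 → Fin 3 := ![1, 2, 2]

def mult : Fin 3 → ℕ := ![2, 2, 1]

noncomputable def form (e : Fin 3) (c : ℂ) : S := X (src e) - C c * X (tgt e)

theorem prime_form (e : Fin 3) (c : ℂ) : Prime (form e c) :=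
  prime_X_sub_C_mul_X (by fin_cases e <;> decide) c

theorem derAppL_form (e : Fin 3) (c : ℂ) (θ : MvDer 3 ℂ) :
    derAppL (form e c) θ = θ (src e) - C c * θ (tgt e) :=
  derAppL_X_sub_C_mul_X _ _ c θ

theorem X_zero_not_dvd_form (e : Fin 3) {c : ℂ} (hc : c ≠ 0) : ¬ X 0 ∣ form e c := by
  refine not_dvd_of_eval_eq_zero (![![0, 1, 0], ![0, 0, 1], ![0, 1, 0]] e) ?_ ?_ <;>
    fin_cases e <;> simp [form, src, tgt, hc]

variable {m : ℕ} {ζ : ℂ}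

theorem form_not_dvd_form (hζ : IsPrimitiveRoot ζ (m + 2)) {e e' : Fin 3} {k k' : ℕ}
    (hk : k < m + 2) (hk' : k' < m + 2) (hne : (e, k) ≠ (e', k')) :
    ¬ form e (ζ ^ k) ∣ form e' (ζ ^ k') := by
  have hz : ζ ^ k ≠ 0 := pow_ne_zero _ (hζ.ne_zero (by omega))
  have hz' : ζ ^ k' ≠ 0 := pow_ne_zero _ (hζ.ne_zero (by omega))
  have hinj : ζ ^ k = ζ ^ k' → k = k' := hζ.pow_inj hk hk'
  refine not_dvd_of_eval_eq_zero (![![ζ ^ k, 1, 0], ![ζ ^ k, 0, 1], ![0, ζ ^ k, 1]] e) ?_ ?_ <;>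
    fin_cases e <;> fin_cases e' <;> simp_all [form, src, tgt, sub_eq_zero]

noncomputable def multiarr (r : ℕ) (ζ : ℂ) : Finset (S × ℕ) :=
  {((X 0 : S), r - 1)} ∪
    ((range r).image fun k => ((X 0 - C (ζ ^ k) * X 1 : S), 2)) ∪
    ((range r).image fun k => ((X 0 - C (ζ ^ k) * X 2 : S), 2)) ∪
    ((range r).image fun k => ((X 1 - C (ζ ^ k) * X 2 : S), 1))

theorem mem_multiarr {p : S × ℕ} :
    p ∈ multiarr (m + 2) ζ ↔
      p = (X 0, m + 1) ∨ ∃ e, ∃ k < m + 2, p = (form e (ζ ^ k), mult e) := by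
  simp [multiarr, Fin.exists_fin_succ, form, src, tgt, mult, @eq_comm _ p]

/-- The Saito basis, with `r = m + 2`. -/
noncomputable def basisDer (m : ℕ) : Fin 3 → MvDer 3 ℂ :=
  ![![(m + 2 : S) * X 0 ^ (m + 3),
      (m + 3 : S) * X 0 ^ (m + 2) * X 1 - X 1 ^ (m + 3),
      (m + 3 : S) * X 0 ^ (m + 2) * X 2 - X 2 ^ (m + 3)],
    ![0,
      X 1 * (X 0 ^ (m + 2) - X 1 ^ (m + 2)) ^ 2,
      X 2 * (X 0 ^ (m + 2) - X 2 ^ (m + 2)) ^ 2],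
    ![(m + 2 : S) * X 0 ^ (m + 1) * X 1 ^ (m + 1) * X 2 ^ (m + 1),
      X 0 ^ m * X 2 ^ (m + 1) * (X 0 ^ (m + 2) + (m + 1 : S) * X 1 ^ (m + 2)),
      X 0 ^ m * X 1 ^ (m + 1) * (X 0 ^ (m + 2) + (m + 1 : S) * X 2 ^ (m + 2))]]

noncomputable def definingPoly (m : ℕ) : S :=
  X 0 ^ (m + 1) * (X 0 ^ (m + 2) - X 1 ^ (m + 2)) ^ 2 * (X 0 ^ (m + 2) - X 2 ^ (m + 2)) ^ 2 *
    (X 1 ^ (m + 2) - X 2 ^ (m + 2))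

theorem det_basisDer (m : ℕ) : (Matrix.of (basisDer m)).det = (m + 2) * definingPoly m := by
  simp [Matrix.det_fin_three, basisDer, definingPoly]
  ring

theorem isHomogDer_basisDer (m : ℕ) (j : Fin 3) :
    IsHomogDer (basisDer m j) (![m + 3, 2 * m + 5, 3 * m + 3] j) := by
  have hX := isHomogeneous_X_pow (σ := Fin 3) (R := ℂ)
  have hc1 : ((m : S) + 1).IsHomogeneous 0 := by simpa using isHomogeneous_natCast_add m 1
  have hc2 : ((m : S) + 2).IsHomogeneous 0 := by simpa using isHomogeneous_natCast_add m 2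
  have hc3 : ((m : S) + 3).IsHomogeneous 0 := by simpa using isHomogeneous_natCast_add m 3
  have hsub (a b : Fin 3) : (X a ^ (m + 2) - X b ^ (m + 2) : S).IsHomogeneous (m + 2) :=
    (hX a _).sub (hX b _)
  have hadd (a : Fin 3) : (X 0 ^ (m + 2) + (m + 1 : S) * X a ^ (m + 2)).IsHomogeneous (m + 2) :=
    (hX 0 _).add (hc1.mul_of_add_eq (hX a _) (by ring))
  intro i
  fin_cases j <;> fin_cases i <;> simp only [basisDer] <;> simp
  · exact hc2.mul_of_add_eq (hX 0 _) (by ring)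
  · exact ((hc3.mul_of_add_eq (hX 0 _) rfl).mul_of_add_eq (isHomogeneous_X ℂ 1) (by ring)).sub
      (hX 1 _)
  · exact ((hc3.mul_of_add_eq (hX 0 _) rfl).mul_of_add_eq (isHomogeneous_X ℂ 2) (by ring)).sub
      (hX 2 _)
  · exact isHomogeneous_zero _ _ _
  · exact (isHomogeneous_X ℂ 1).mul_of_add_eq ((hsub 0 1).pow 2) (by ring)
  · exact (isHomogeneous_X ℂ 2).mul_of_add_eq ((hsub 0 2).pow 2) (by ring)
  · exact (((hc2.mul_of_add_eq (hX 0 _) rfl).mul_of_add_eq (hX 1 _) rfl).mul_of_add_eq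
      (hX 2 _) (by ring))
  · exact ((hX 0 m).mul_of_add_eq (hX 2 _) rfl).mul_of_add_eq (hadd 1) (by ring)
  · exact ((hX 0 m).mul_of_add_eq (hX 1 _) rfl).mul_of_add_eq (hadd 2) (by ring)

variable {c : ℂ}

/-- Each case reduces, using `c ^ r = 1`, to `a - b ∣ a ^ n - b ^ n` or to
`sub_sq_dvd_natCast_mul_pow_succ_sub`, at `b = c x`. -/
theorem form_pow_dvd_basisDer (hc : c ^ (m + 2) = 1) (j e : Fin 3) :
    form e c ^ mult e ∣ basisDer m j (src e) - C c * basisDer m j (tgt e) := by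
  have hC : (C c : S) ^ (m + 2) = 1 := by rw [← map_pow, hc, map_one]
  have hdiv (a b : Fin 3) := sub_mul_dvd_pow_sub_pow_of_pow_eq_one hC (X a : S) (X b)
  fin_cases j <;> fin_cases e <;> simp [basisDer, form, src, tgt, mult]
  · obtain ⟨g, hg⟩ := sub_sq_dvd_natCast_mul_pow_succ_sub (X 0 : S) (C c * X 1) (m + 2)
    push_cast at hg
    exact ⟨g, by linear_combination hg - C c * X 1 ^ (m + 3) * hC⟩
  · obtain ⟨g, hg⟩ := sub_sq_dvd_natCast_mul_pow_succ_sub (X 0 : S) (C c * X 2) (m + 2)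
    push_cast at hg
    exact ⟨g, by linear_combination hg - C c * X 2 ^ (m + 3) * hC⟩
  · obtain ⟨g, hg⟩ := sub_dvd_pow_sub_pow (X 1 : S) (C c * X 2) (m + 3)
    exact ⟨(m + 3 : S) * X 0 ^ (m + 2) - g, by linear_combination -hg - C c * X 2 ^ (m + 3) * hC⟩
  · exact dvd_mul_of_dvd_right (dvd_mul_of_dvd_right (pow_dvd_pow_of_dvd (hdiv 0 1) 2) _) _
  · exact dvd_mul_of_dvd_right (dvd_mul_of_dvd_right (pow_dvd_pow_of_dvd (hdiv 0 2) 2) _) _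
  · obtain ⟨g, hg⟩ := sub_dvd_pow_sub_pow (X 1 : S) (C c * X 2) (m + 2)
    set s : S := 2 * X 0 ^ (m + 2) - X 1 ^ (m + 2) - X 2 ^ (m + 2)
    exact ⟨(X 0 ^ (m + 2) - X 1 ^ (m + 2)) ^ 2 - C c * X 2 * g * s,
      by linear_combination -(C c * X 2 * s) * hg - C c * X 2 ^ (m + 3) * s * hC⟩
  · obtain ⟨g, hg⟩ := sub_sq_dvd_natCast_mul_pow_succ_sub (C c * X 1 : S) (X 0) (m + 1)
    push_cast at hg
    exact ⟨-(X 0 ^ m * X 2 ^ (m + 1) * C c) * g, by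
      linear_combination -(X 0 ^ m * X 2 ^ (m + 1) * C c) * hg -
        ((m + 2) * X 0 ^ (m + 1) * X 1 ^ (m + 1) * X 2 ^ (m + 1) -
          (m + 1) * C c * X 0 ^ m * X 1 ^ (m + 2) * X 2 ^ (m + 1)) * hC⟩
  · obtain ⟨g, hg⟩ := sub_sq_dvd_natCast_mul_pow_succ_sub (C c * X 2 : S) (X 0) (m + 1)
    push_cast at hg
    exact ⟨-(X 0 ^ m * X 1 ^ (m + 1) * C c) * g, by
      linear_combination -(X 0 ^ m * X 1 ^ (m + 1) * C c) * hg -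
        ((m + 2) * X 0 ^ (m + 1) * X 1 ^ (m + 1) * X 2 ^ (m + 1) -
          (m + 1) * C c * X 0 ^ m * X 2 ^ (m + 2) * X 1 ^ (m + 1)) * hC⟩
  · obtain ⟨g, hg⟩ := sub_dvd_pow_sub_pow (X 1 : S) (C c * X 2) (m + 1)
    exact ⟨X 0 ^ m * (X 0 ^ (m + 2) * -C c * g + (m + 1 : S) * X 1 ^ (m + 1) * X 2 ^ (m + 1)), by
      linear_combination -C c * X 0 ^ (2 * m + 2) * hg - X 0 ^ (2 * m + 2) * X 2 ^ (m + 1) * hC⟩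

theorem X_zero_pow_dvd_basisDer (m : ℕ) (j : Fin 3) : (X 0 : S) ^ (m + 1) ∣ basisDer m j 0 := by
  fin_cases j
  · exact ⟨(m + 2 : S) * X 0 ^ 2, by simp [basisDer]; ring⟩
  · simp [basisDer]
  · exact ⟨(m + 2 : S) * X 1 ^ (m + 1) * X 2 ^ (m + 1), by simp [basisDer]; ring⟩

theorem basisDer_mem (hζ : IsPrimitiveRoot ζ (m + 2)) (j : Fin 3) :
    basisDer m j ∈ DmodP (multiarr (m + 2) ζ) := by
  refine mem_DmodP_iff.mpr fun p hp => ?_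
  obtain rfl | ⟨e, k, -, rfl⟩ := mem_multiarr.mp hp
  · rw [derAppL_X_s14]
    exact X_zero_pow_dvd_basisDer m j
  · rw [derAppL_form]
    exact form_pow_dvd_basisDer (by rw [← pow_mul, mul_comm, pow_mul, hζ.pow_eq_one, one_pow]) j e

theorem definingPoly_eq_prod (hζ : IsPrimitiveRoot ζ (m + 2)) :
    definingPoly m =
      X 0 ^ (m + 1) * ∏ t ∈ univ ×ˢ range (m + 2), form t.1 (ζ ^ t.2) ^ mult t.1 := by
  have hprod (e : Fin 3) :
      ∏ k ∈ range (m + 2), form e (ζ ^ k) = X (src e) ^ (m + 2) - X (tgt e) ^ (m + 2) := by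
    simp_rw [form, map_pow]
    exact (hζ.map_of_injective (C_injective _ _)).prod_range_sub_pow_mul (by omega) _ _
  simp only [prod_product, prod_pow, hprod, Fin.prod_univ_three, definingPoly]
  simp [src, tgt, mult, mul_assoc]

theorem definingPoly_ne_zero (hζ : IsPrimitiveRoot ζ (m + 2)) : definingPoly m ≠ 0 := by
  rw [definingPoly_eq_prod hζ]
  exact mul_ne_zero (pow_ne_zero _ (X_ne_zero _))
    (prod_ne_zero_iff.mpr fun t _ => pow_ne_zero _ (prime_form _ _).ne_zero)

theorem definingPoly_dvd_det (hζ : IsPrimitiveRoot ζ (m + 2)) {η : Fin 3 → MvDer 3 ℂ}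
    (hη : ∀ l, η l ∈ DmodP (multiarr (m + 2) ζ)) : definingPoly m ∣ (Matrix.of η).det := by
  have hz (k : ℕ) : ζ ^ k ≠ 0 := pow_ne_zero _ (hζ.ne_zero (by omega))
  rw [definingPoly_eq_prod hζ]
  refine IsRelPrime.mul_dvd ?_ ?_ (prod_dvd_of_isRelPrime ?_ fun t ht => ?_)
  · refine IsRelPrime.prod_right fun t _ => IsRelPrime.pow ?_
    have h : ¬ (X 0 : S) ∣ form t.1 (ζ ^ t.2) := X_zero_not_dvd_form _ (hz _)
    exact (X_prime (R := ℂ)).irreducible.isRelPrime_iff_not_dvd.mpr h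
  · have h0 : ((X 0 : S), m + 1) ∈ multiarr (m + 2) ζ := mem_multiarr.mpr (Or.inl rfl)
    have hu : IsUnit (pderiv 0 (X 0 : S)) := by simp
    exact (pow_dvd_det_of_mem_DmodP hη h0 hu :)
  · rintro ⟨e, k⟩ ht ⟨e', k'⟩ ht' hne
    simp only [coe_product, Set.mem_prod, coe_range, Set.mem_Iio] at ht ht'
    have h : ¬ form e (ζ ^ k) ∣ form e' (ζ ^ k') := form_not_dvd_form hζ ht.2 ht'.2 hne
    exact ((prime_form _ _).irreducible.isRelPrime_iff_not_dvd.mpr h).pow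
  · obtain ⟨e, k⟩ := t
    have hk : k < m + 2 := mem_range.mp (mem_product.mp ht).2
    have hu : IsUnit (pderiv (src e) (form e (ζ ^ k))) := by
      fin_cases e <;> simp [form, src, tgt]
    have hmem : (form e (ζ ^ k), mult e) ∈ multiarr (m + 2) ζ :=
      mem_multiarr.mpr (Or.inr ⟨e, k, hk, rfl⟩)
    exact (pow_dvd_det_of_mem_DmodP hη hmem hu :)

end Grr4

/-- The rank-3 multiarrangement in `ℂ³` with defining polynomial
`x₁^(r-1) (x₁^r - x₂^r)² (x₁^r - x₃^r)² (x₂^r - x₃^r)` (for `r ≥ 2`) is free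
with exponents `{r+1, 2r+1, 3(r-1)}`. -/
theorem Grr4_ziegler_restriction_free
    (r : ℕ) (hr : 2 ≤ r) (ζ : ℂ) (hζ : IsPrimitiveRoot ζ r)
    (P : Finset (MvPolynomial (Fin 3) ℂ × ℕ))
    (hP : P =
      {((MvPolynomial.X 0 : MvPolynomial (Fin 3) ℂ), r - 1)} ∪
      ((Finset.range r).image fun k =>
        ((MvPolynomial.X 0 - MvPolynomial.C (ζ ^ k) * MvPolynomial.X 1 :
          MvPolynomial (Fin 3) ℂ), 2)) ∪
      ((Finset.range r).image fun k =>
        ((MvPolynomial.X 0 - MvPolynomial.C (ζ ^ k) * MvPolynomial.X 2 :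
          MvPolynomial (Fin 3) ℂ), 2)) ∪
      ((Finset.range r).image fun k =>
        ((MvPolynomial.X 1 - MvPolynomial.C (ζ ^ k) * MvPolynomial.X 2 :
          MvPolynomial (Fin 3) ℂ), 1))) :
    FreeWithExps (DmodP P) ![r + 1, 2 * r + 1, 3 * (r - 1)] := by
  obtain ⟨m, rfl⟩ : ∃ m, r = m + 2 := ⟨r - 2, by omega⟩
  change P = Grr4.multiarr (m + 2) ζ at hP
  subst hP
  have hunit : IsUnit ((m : MvPolynomial (Fin 3) ℂ) + 2) := by
    rw [← map_natCast C, ← map_ofNat C, ← map_add]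
    exact (IsUnit.mk0 _ (by norm_cast)).map C
  have hexps :
      ![m + 2 + 1, 2 * (m + 2) + 1, 3 * (m + 2 - 1)] = ![m + 3, 2 * m + 5, 3 * m + 3] := by
    ext j
    fin_cases j <;> simp <;> omega
  refine ⟨Grr4.basisDer m, isBasisOf_of_det_eq_unit_mul hunit (Grr4.definingPoly_ne_zero hζ)
    (Grr4.basisDer_mem hζ) (Grr4.det_basisDer m) fun η hη => Grr4.definingPoly_dvd_det hζ hη, ?_⟩
  rw [hexps]
  exact Grr4.isHomogDer_basisDer m
end
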